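/- arXiv:math/0010080 — 2 statements merged into one kernel-verified Lean document; each statement's English description precedes it below -/
import Mathlib

section
/- Let e_1, ..., e_{n-1} be nonnegative integers with e_0 := 0 such that e_i - e_{i-1} ≤ 1 for 2 ≤ i ≤ n-1 and Σ e_i ≥ 1. Then Σ_{i=1}^{n-1} e_i(1 + e_i - e_{i-1}) ≥ 2, with equality if and only if Σ_{i=1}^{n-1} e_i = 1. -/
/-!
Write `d_i = e_i - e_{i-1}`, `S = Σ e_i` and `Q = Σ e_i d_i`, so the sum in question is `S + Q`.
Since `e_i ≥ 0` and `d_i ≤ 1`, `Q ≤ S`. Summation by parts gives `2Q = e_{n-1}^2 + Σ d_i^2`, and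
not all `d_i` vanish because `S ≠ 0`, so `Q ≥ 1`. Hence `S + Q ≥ 2`, with equality iff `S = Q = 1`,
i.e. iff `S = 1`.
-/

open Finset

lemma sum_Icc_sub_pred {M : Type*} [AddCommGroup M] (f : ℕ → M) (m : ℕ) :
    ∑ i ∈ Icc 1 m, (f i - f (i - 1)) = f m - f 0 := by
  induction m with
  | zero => simp
  | succ m ih =>
    rw [sum_Icc_succ_top (by omega), ih]
    simp

lemma two_mul_sum_mul_sub_pred {R : Type*} [CommRing R] {f : ℕ → R} {m : ℕ}
    (hf0 : f 0 = 0) :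
    2 * ∑ i ∈ Icc 1 m, f i * (f i - f (i - 1)) =
      f m ^ 2 + ∑ i ∈ Icc 1 m, (f i - f (i - 1)) ^ 2 := by
  have key : ∀ i, 2 * (f i * (f i - f (i - 1))) =
      (f i ^ 2 - f (i - 1) ^ 2) + (f i - f (i - 1)) ^ 2 := fun i => by ring
  rw [mul_sum, sum_congr rfl fun i _ => key i, sum_add_distrib,
    sum_Icc_sub_pred (fun i => f i ^ 2), hf0]
  ring

section OrderedRing

variable {R : Type*} [CommRing R] [LinearOrder R] [IsStrictOrderedRing R]
  {f : ℕ → R} {m : ℕ}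

lemma sum_sq_sub_pred_pos {k : ℕ} (hf0 : f 0 = 0) (hk : k ∈ Icc 1 m) (hfk : f k ≠ 0) :
    0 < ∑ i ∈ Icc 1 m, (f i - f (i - 1)) ^ 2 := by
  refine (sum_nonneg fun i _ => sq_nonneg _).lt_of_ne fun hzero => hfk ?_
  have hsteps : ∀ i ∈ Icc 1 m, f i - f (i - 1) = 0 := fun i hi =>
    pow_eq_zero_iff two_ne_zero |>.mp <|
      (sum_eq_zero_iff_of_nonneg fun j _ => sq_nonneg _).mp hzero.symm i hi
  have hkm : Icc 1 k ⊆ Icc 1 m := Icc_subset_Icc_right (mem_Icc.mp hk).2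
  calc f k = f k - f 0 := by rw [hf0, sub_zero]
    _ = ∑ i ∈ Icc 1 k, (f i - f (i - 1)) := (sum_Icc_sub_pred f k).symm
    _ = 0 := sum_eq_zero fun i hi => hsteps i (hkm hi)

lemma sum_mul_sub_pred_pos {k : ℕ} (hf0 : f 0 = 0) (hk : k ∈ Icc 1 m) (hfk : f k ≠ 0) :
    0 < ∑ i ∈ Icc 1 m, f i * (f i - f (i - 1)) := by
  have h := two_mul_sum_mul_sub_pred (m := m) hf0
  have := sum_sq_sub_pred_pos hf0 hk hfk
  linarith [sq_nonneg (f m)]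

end OrderedRing

/-- Lemma `es`, part 2: for nonnegative integers `e_1, …, e_{n-1}` with `e_0 = 0`,
`e_i - e_{i-1} ≤ 1` for `1 ≤ i ≤ n-1`, and `Σ e_i ≥ 1`, one has
`Σ e_i (1 + e_i - e_{i-1}) ≥ 2`, with equality iff `Σ e_i = 1`. -/
theorem stmt_2 (n : ℕ) (e : ℕ → ℤ) (he0 : e 0 = 0)
    (hnn : ∀ i ∈ Finset.Icc 1 (n - 1), 0 ≤ e i)
    (hstep : ∀ i ∈ Finset.Icc 1 (n - 1), e i - e (i - 1) ≤ 1)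
    (hsum : 1 ≤ ∑ i ∈ Finset.Icc 1 (n - 1), e i) :
    2 ≤ ∑ i ∈ Finset.Icc 1 (n - 1), e i * (1 + e i - e (i - 1)) ∧
      ((∑ i ∈ Finset.Icc 1 (n - 1), e i * (1 + e i - e (i - 1))) = 2 ↔
        (∑ i ∈ Finset.Icc 1 (n - 1), e i) = 1) := by
  set S := ∑ i ∈ Icc 1 (n - 1), e i
  set Q := ∑ i ∈ Icc 1 (n - 1), e i * (e i - e (i - 1))
  have hsplit : ∑ i ∈ Icc 1 (n - 1), e i * (1 + e i - e (i - 1)) = S + Q := by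
    rw [← sum_add_distrib]
    exact sum_congr rfl fun i _ => by ring
  have hQS : Q ≤ S :=
    sum_le_sum fun i hi => mul_le_of_le_one_right (hnn i hi) (hstep i hi)
  obtain ⟨k, hk, hek⟩ := exists_ne_zero_of_sum_ne_zero (s := Icc 1 (n - 1)) (f := e) (by omega)
  have hQ : 0 < Q := sum_mul_sub_pred_pos he0 hk hek
  rw [hsplit]
  omega
end

section
/- Let M_l be the l × l tridiagonal matrix over Z[x_1, ..., x_l, q_1, ..., q_{l-1}] with diagonal entries x_1, ..., x_l, entries q_i in position (i, i+1), entries -1 in position (i+1, i), and 0 elsewhere. Then det(M_l + λ·I) = Σ_{k=0}^{l} e^q_k(l) · λ^{l-k}, where e^q_k(l) are the quantum elementary symmetric polynomials defined by e^q_k(l) = e^q_k(l-1) + x_l e^q_{k-1}(l-1) + q_{l-1} e^q_{k-2}(l-2), e^q_0 = 1, e^q_k(l) = 0 for k < 0 or k > l. -/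
/-! Expanding `det (M_l + λ I)` along its last row shows that these determinants satisfy the
continuant recurrence `D_{n+2} = (x_{n+2} + λ) D_{n+1} + q_{n+1} D_n`. The recursion defining
`e^q_k` says, coefficient by coefficient in `λ`, that the polynomials `Σ_k e^q_k(m) λ^{m-k}`
satisfy the same recurrence, and both sequences start with `1` and `x_1 + λ`. -/

open MvPolynomial

/-- The variable `x_i`. -/
noncomputable def xvar (i : ℕ) : MvPolynomial (ℕ ⊕ ℕ) ℤ := X (Sum.inl i)

/-- The variable `q_i`. -/
noncomputable def qvar (i : ℕ) : MvPolynomial (ℕ ⊕ ℕ) ℤ := X (Sum.inr i)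

/-- The `l × l` tridiagonal matrix `M_l` with diagonal `x_1, …, x_l`, entries `q_i`
in position `(i, i+1)`, `-1` in position `(i+1, i)`, and `0` elsewhere (0-indexed here),
with polynomial entries in the extra variable `λ`. -/
noncomputable def triMat (l : ℕ) :
    Matrix (Fin l) (Fin l) (Polynomial (MvPolynomial (ℕ ⊕ ℕ) ℤ)) :=
  Matrix.of fun a b =>
    if a = b then Polynomial.C (xvar ((a : ℕ) + 1))
    else if (b : ℕ) = (a : ℕ) + 1 then Polynomial.C (qvar ((a : ℕ) + 1))
    else if (a : ℕ) = (b : ℕ) + 1 then -1 else 0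

namespace Matrix

variable {R : Type*} [CommRing R]

def tridiag (d u s : ℕ → R) (n : ℕ) : Matrix (Fin n) (Fin n) R :=
  of fun a b =>
    if a = b then d a
    else if (b : ℕ) = a + 1 then u a
    else if (a : ℕ) = b + 1 then s b else 0

variable (d u s : ℕ → R)

theorem tridiag_submatrix_castSucc (n : ℕ) :
    (tridiag d u s (n + 1)).submatrix Fin.castSucc Fin.castSucc = tridiag d u s n := by
  ext a b
  simp [tridiag, Fin.ext_iff]

theorem det_tridiag_zero : (tridiag d u s 0).det = 1 :=
  det_isEmpty

theorem det_tridiag_one : (tridiag d u s 1).det = d 0 := by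
  simp [tridiag]

theorem det_tridiag_succ_succ (n : ℕ) :
    (tridiag d u s (n + 2)).det =
      d (n + 1) * (tridiag d u s (n + 1)).det - u n * s n * (tridiag d u s n).det := by
  set A := tridiag d u s (n + 2)
  have hrow : ∀ k : Fin n, A (Fin.last _) k.castSucc.castSucc = 0 := by
    intro k
    have := k.isLt
    simp only [A, tridiag, of_apply, Fin.ext_iff, Fin.val_last, Fin.val_castSucc]
    split_ifs <;> first | rfl | omega
  have hcorner : A (Fin.last _) (Fin.last _) = d (n + 1) := by
    simp [A, tridiag]
  have hsub : A (Fin.last _) (Fin.last n).castSucc = s n := by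
    simp only [A, tridiag, of_apply, Fin.ext_iff, Fin.val_last, Fin.val_castSucc]
    split_ifs <;> first | rfl | omega
  -- the minor of the subdiagonal entry has a single nonzero entry `u n` in its last column
  have hminor : (A.submatrix Fin.castSucc (Fin.last n).castSucc.succAbove).det =
      u n * (tridiag d u s n).det := by
    set M := A.submatrix Fin.castSucc (Fin.last n).castSucc.succAbove
    have hcol : ∀ k : Fin n, M k.castSucc (Fin.last n) = 0 := by
      intro k
      have := k.isLt
      simp only [M, A, submatrix_apply, tridiag, of_apply, Fin.ext_iff,
        Fin.succAbove_castSucc_self, Fin.val_succ, Fin.val_last, Fin.val_castSucc]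
      split_ifs <;> first | rfl | omega
    have hcorner : M (Fin.last n) (Fin.last n) = u n := by
      simp [M, A, tridiag, Fin.ext_iff]
    have hrest : M.submatrix Fin.castSucc Fin.castSucc = tridiag d u s n := by
      ext a b
      simp [M, A, tridiag, Fin.ext_iff, Fin.succAbove_of_castSucc_lt, Fin.lt_def]
    rw [det_succ_column M (Fin.last n), Fin.sum_univ_castSucc]
    simp only [hcol, hcorner, Fin.succAbove_last, hrest, mul_zero, zero_mul,
      Finset.sum_const_zero, zero_add, Fin.val_last,
      (Even.neg_one_pow ⟨n, rfl⟩ : (-1 : R) ^ (n + n) = 1), one_mul]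
  rw [det_succ_row A (Fin.last _), Fin.sum_univ_castSucc, Fin.sum_univ_castSucc]
  simp only [hrow, hminor, hcorner, hsub, Fin.succAbove_last, A, tridiag_submatrix_castSucc,
    mul_zero, zero_mul, Finset.sum_const_zero, zero_add, Fin.val_last, Fin.val_castSucc,
    (Even.neg_one_pow ⟨n + 1, rfl⟩ : (-1 : R) ^ (n + 1 + (n + 1)) = 1),
    (Odd.neg_one_pow ⟨n, by ring⟩ : (-1 : R) ^ (n + 1 + n) = -1)]
  ring

end Matrix

section LambdaSum

open scoped Polynomial
open Finset

variable {A : Type*} [CommRing A]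

noncomputable def lambdaSum (E : ℕ → ℕ → A) (m : ℕ) : A[X] :=
  ∑ k ∈ range (m + 1), Polynomial.C (E k m) * Polynomial.X ^ (m - k)

theorem lambdaSum_eq_sum_antidiagonal (E : ℕ → ℕ → A) (m : ℕ) :
    lambdaSum E m = ∑ p ∈ antidiagonal m, Polynomial.C (E p.1 m) * Polynomial.X ^ p.2 :=
  (Nat.sum_antidiagonal_eq_sum_range_succ (fun k j => Polynomial.C (E k m) * Polynomial.X ^ j)
    m).symm

variable {x q : ℕ → A} {E : ℕ → ℕ → A} (hE0 : ∀ m, E 0 m = 1)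
  (hEhigh : ∀ k m, m < k → E k m = 0)
  (hrec : ∀ k m, 1 ≤ k → 1 ≤ m →
    E k m = E k (m - 1) + x m * E (k - 1) (m - 1) +
      (if 2 ≤ k ∧ 2 ≤ m then q (m - 1) * E (k - 2) (m - 2) else 0))
include hE0

theorem lambdaSum_zero : lambdaSum E 0 = 1 := by
  simp [lambdaSum, hE0]

include hEhigh hrec

theorem lambdaSum_one : lambdaSum E 1 = Polynomial.C (x 1) + Polynomial.X := by
  have hE11 : E 1 1 = x 1 := by
    simpa [hE0, hEhigh 1 0 one_pos] using hrec 1 1 le_rfl le_rfl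
  simp [lambdaSum, sum_range_succ, hE0, hE11, add_comm]

theorem lambdaSum_succ_succ (n : ℕ) :
    lambdaSum E (n + 2) = (Polynomial.C (x (n + 2)) + Polynomial.X) * lambdaSum E (n + 1) +
      Polynomial.C (q (n + 1)) * lambdaSum E n := by
  have hX : Polynomial.X * lambdaSum E (n + 1) = Polynomial.X ^ (n + 2) +
      ∑ p ∈ antidiagonal (n + 1), Polynomial.C (E (p.1 + 1) (n + 1)) * Polynomial.X ^ p.2 := by
    rw [lambdaSum_eq_sum_antidiagonal, mul_sum, Nat.sum_antidiagonal_succ,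
      Nat.sum_antidiagonal_succ'
        (f := fun p => Polynomial.C (E (p.1 + 1) (n + 1)) * Polynomial.X ^ p.2),
      hE0, hEhigh (n + 2) (n + 1) (by omega)]
    simp only [map_one, map_zero, one_mul, zero_mul, zero_add, mul_left_comm Polynomial.X,
      ← pow_succ']
  have hq : Polynomial.C (q (n + 1)) * lambdaSum E n = ∑ p ∈ antidiagonal (n + 1),
      Polynomial.C (if p.1 = 0 then 0 else q (n + 1) * E (p.1 - 1) n) * Polynomial.X ^ p.2 := by
    rw [Nat.sum_antidiagonal_succ]
    simp [lambdaSum_eq_sum_antidiagonal, mul_sum, mul_assoc]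
  have hstep : ∀ k, E (k + 1) (n + 2) = E (k + 1) (n + 1) + x (n + 2) * E k (n + 1) +
      if k = 0 then 0 else q (n + 1) * E (k - 1) n := by
    intro k
    rw [hrec (k + 1) (n + 2) (by omega) (by omega)]
    rcases k with _ | k <;> simp
  rw [lambdaSum_eq_sum_antidiagonal E (n + 2), Nat.sum_antidiagonal_succ, hE0, add_mul, hX, hq]
  simp only [hstep, map_add, add_mul, sum_add_distrib]
  rw [lambdaSum_eq_sum_antidiagonal E (n + 1), mul_sum]
  simp only [map_mul, map_one, one_mul, mul_assoc]
  ring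

end LambdaSum

theorem triMat_add_X_smul_one (l : ℕ) :
    triMat l + (Polynomial.X : Polynomial (MvPolynomial (ℕ ⊕ ℕ) ℤ)) • 1 =
      Matrix.tridiag (fun i => Polynomial.C (xvar (i + 1)) + Polynomial.X)
        (fun i => Polynomial.C (qvar (i + 1))) (fun _ => -1) l := by
  ext a b
  by_cases hab : a = b
  · simp [triMat, Matrix.tridiag, hab]
  · simp [triMat, Matrix.tridiag, hab, Matrix.one_apply_ne hab]

/-- `det(M_l + λ·I) = Σ_{k=0}^{l} e^q_k(l) λ^{l-k}`, where `e^q_k(l)` are the quantum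
elementary symmetric polynomials, defined by the recursion
`e^q_k(l) = e^q_k(l-1) + x_l e^q_{k-1}(l-1) + q_{l-1} e^q_{k-2}(l-2)`,
`e^q_0 = 1`, `e^q_k(l) = 0` for `k > l`. -/
theorem stmt_11 (l : ℕ) (E : ℕ → ℕ → MvPolynomial (ℕ ⊕ ℕ) ℤ)
    (hE0 : ∀ m, E 0 m = 1)
    (hEhigh : ∀ k m, m < k → E k m = 0)
    (hrec : ∀ k m, 1 ≤ k → 1 ≤ m →
      E k m = E k (m - 1) + xvar m * E (k - 1) (m - 1) +
        (if 2 ≤ k ∧ 2 ≤ m then qvar (m - 1) * E (k - 2) (m - 2) else 0)) :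
    (triMat l + (Polynomial.X : Polynomial (MvPolynomial (ℕ ⊕ ℕ) ℤ)) • (1 : Matrix (Fin l) (Fin l) (Polynomial (MvPolynomial (ℕ ⊕ ℕ) ℤ)))).det =
      ∑ k ∈ Finset.range (l + 1), Polynomial.C (E k l) * Polynomial.X ^ (l - k) := by
  rw [triMat_add_X_smul_one]
  change _ = lambdaSum E l
  induction l using Nat.twoStepInduction with
  | zero => rw [Matrix.det_tridiag_zero, lambdaSum_zero hE0]
  | one => rw [Matrix.det_tridiag_one, lambdaSum_one hE0 hEhigh hrec, add_comm]
  | more n ih ih' =>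
    rw [Matrix.det_tridiag_succ_succ, ih, ih', lambdaSum_succ_succ hE0 hEhigh hrec]
    ring
end
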